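/- Let n > 2 and let K_12 = (S_n ∪ {g_1}, S_n ∪ {m_1,m_2}, I) be the formal context in which (g,m) ∈ I iff g,m ∈ S_n and g ≠ m, or g = g_1 and m ∈ S_n, or g ∈ m_1' and m = m_1, or g ∈ m_2' and m = m_2, where m_1', m_2' ⊆ S_n satisfy m_1' ∪ m_2' = S_n, ∅ ⊊ m_1', m_2' ⊊ S_n, and m_1', m_2' are incomparable. Let K_s be the ∃-generalized context obtained from K_12 by replacing m_1, m_2 with a single attribute s whose extension is m_1' ∪ m_2'. Then |𝔅(K_s)| − |𝔅(K_12)| = 2^n − 2^{|m_1'|} − 2^{|m_2'|} + 2^{|m_1' ∩ m_2'|}. -/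

import Mathlib

/-!
A concept is determined by its extent, so it suffices to count the closed sets of objects.
In both contexts an object `x ∈ S_n` outside `A` is separated from `A` by the attribute `x` of
the contranominal scale, so `A` fails to be closed only when `g_1 ∉ A` and no extra attribute
is shared by all of `A`. In `K_s` the attribute `s` is shared by all of `S_n`, so all `2^(n+1)`
sets are extents; in `K_12` the non-extents are the `S ⊆ S_n` contained in neither `m_1'` nor
`m_2'`, and inclusion–exclusion over `𝒫 m_1' ∪ 𝒫 m_2'` counts them.
-/

/-- The intent (attribute derivation) of a set of objects. -/
def intentOf {G M : Type*} (I : G → M → Prop) (A : Set G) : Set M :=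
  {m | ∀ g ∈ A, I g m}

/-- The extent (object derivation) of a set of attributes. -/
def extentOf {G M : Type*} (I : G → M → Prop) (B : Set M) : Set G :=
  {g | ∀ m ∈ B, I g m}

/-- The formal concepts of a context: pairs `(A, B)` with `A' = B` and `B' = A`. -/
def Concepts {G M : Type*} (I : G → M → Prop) : Set (Set G × Set M) :=
  {p | intentOf I p.1 = p.2 ∧ extentOf I p.2 = p.1}

/-- The context `K_12 = (S_n ∪ {g_1}, S_n ∪ {m_1, m_2}, I)` with prescribed
extensions `m1, m2 ⊆ S_n` of the two extra attributes: objects are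
`Fin n ⊕ Unit` (with `Sum.inr () = g_1`), attributes are `Fin n ⊕ Bool`
(with `Sum.inr false = m_1` and `Sum.inr true = m_2`). -/
def K12 (n : ℕ) (m1 m2 : Set (Fin n)) :
    (Fin n ⊕ Unit) → (Fin n ⊕ Bool) → Prop
  | Sum.inl g, Sum.inl m => g ≠ m
  | Sum.inr _, Sum.inl _ => True
  | Sum.inl g, Sum.inr false => g ∈ m1
  | Sum.inl g, Sum.inr true => g ∈ m2
  | Sum.inr _, Sum.inr _ => False

/-- The ∃-generalized context `K_s`: the attributes `m_1, m_2` of `K_12` are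
replaced by a single attribute `s = Sum.inr ()` with extension
`s' = m_1' ∪ m_2'`, leaving the remaining attributes and incidences
unchanged. -/
def Ks (n : ℕ) (m1 m2 : Set (Fin n)) :
    (Fin n ⊕ Unit) → (Fin n ⊕ Unit) → Prop
  | Sum.inl g, Sum.inl m => g ≠ m
  | Sum.inr _, Sum.inl _ => True
  | Sum.inl g, Sum.inr _ => g ∈ m1 ∪ m2
  | Sum.inr _, Sum.inr _ => False

open Set

section FormalConcepts

variable {G M : Type*} (I : G → M → Prop)

lemma subset_extentOf_intentOf (A : Set G) : A ⊆ extentOf I (intentOf I A) :=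
  fun _ hg _ hm => hm _ hg

lemma extentOf_intentOf_eq_iff (A : Set G) :
    extentOf I (intentOf I A) = A ↔ ∀ g ∉ A, ∃ m ∈ intentOf I A, ¬ I g m := by
  refine ⟨fun h g hg => ?_, fun h => (subset_extentOf_intentOf I A).antisymm' fun g hg => ?_⟩
  · rw [← h] at hg
    simpa [extentOf] using hg
  · by_contra hgA
    obtain ⟨m, hm, hgm⟩ := h g hgA
    exact hgm (hg m hm)

def conceptsEquivClosedExtents :
    Concepts I ≃ {A : Set G | extentOf I (intentOf I A) = A} where
  toFun p := ⟨p.1.1, by rw [mem_ofPred_eq, p.2.1]; exact p.2.2⟩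
  invFun A := ⟨(A.1, intentOf I A.1), rfl, A.2⟩
  left_inv p := Subtype.ext (Prod.ext rfl p.2.1)
  right_inv _ := rfl

lemma card_concepts_add_ncard_setOf_extentOf_intentOf_ne [Fintype G] :
    Nat.card (Concepts I) + {A : Set G | extentOf I (intentOf I A) ≠ A}.ncard =
      2 ^ Fintype.card G := by
  rw [Nat.card_congr (conceptsEquivClosedExtents I), Nat.card_coe_set_eq,
    ← Set.compl_ofPred, Set.ncard_add_ncard_compl, Nat.card_eq_fintype_card, Fintype.card_set]

end FormalConcepts

/-- The shape shared by `K_12` and `K_s`: the contranominal scale on `α`, one extra object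
(`g_1`) having every attribute of `α`, and extra attributes `β` (`m_1, m_2`, resp. `s`) that it
lacks. -/
structure IsContranominalExtension {α β : Type*} (I : α ⊕ Unit → α ⊕ β → Prop) :
    Prop where
  inl_inl_iff : ∀ g m, I (.inl g) (.inl m) ↔ g ≠ m
  inr_inl : ∀ m, I (.inr ()) (.inl m)
  not_inr_inr : ∀ b, ¬ I (.inr ()) (.inr b)

namespace IsContranominalExtension

variable {α β : Type*} {I : α ⊕ Unit → α ⊕ β → Prop}

lemma inl_mem_intentOf (hI : IsContranominalExtension I) {A : Set (α ⊕ Unit)} {x : α}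
    (hx : .inl x ∉ A) :
    .inl x ∈ intentOf I A := by
  rintro (y | ⟨⟩) hy
  · exact (hI.inl_inl_iff y x).2 fun hyx => hx (hyx ▸ hy)
  · exact hI.inr_inl x

lemma extentOf_intentOf_eq_iff (hI : IsContranominalExtension I) (A : Set (α ⊕ Unit)) :
    extentOf I (intentOf I A) = A ↔
      .inr () ∈ A ∨ ∃ b, Sum.inl ⁻¹' A ⊆ {x | I (.inl x) (.inr b)} := by
  rw [_root_.extentOf_intentOf_eq_iff]
  constructor
  · intro h
    refine or_iff_not_imp_left.2 fun hA => ?_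
    obtain ⟨m | b, hm, hgm⟩ := h _ hA
    · exact absurd (hI.inr_inl m) hgm
    · exact ⟨b, fun x hx => hm _ hx⟩
  · rintro hA (x | ⟨⟩) hx
    · exact ⟨.inl x, hI.inl_mem_intentOf hx, fun h => (hI.inl_inl_iff x x).1 h rfl⟩
    · obtain ⟨b, hb⟩ := hA.resolve_left hx
      refine ⟨.inr b, ?_, hI.not_inr_inr b⟩
      rintro (y | ⟨⟩) hy
      · exact hb hy
      · exact absurd hy hx

lemma setOf_extentOf_intentOf_ne (hI : IsContranominalExtension I) :
    {A | extentOf I (intentOf I A) ≠ A} =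
      image Sum.inl '' {S : Set α | ∀ b, ¬ S ⊆ {x | I (.inl x) (.inr b)}} := by
  ext A
  simp only [mem_ofPred_eq, ne_eq, hI.extentOf_intentOf_eq_iff, mem_image]
  constructor
  · intro h
    rw [not_or, not_exists] at h
    refine ⟨Sum.inl ⁻¹' A, h.2, image_preimage_eq_iff.2 ?_⟩
    rintro (x | ⟨⟩) hx
    · exact mem_range_self x
    · exact absurd hx h.1
  · rintro ⟨S, hS, rfl⟩
    simpa [preimage_image_eq _ Sum.inl_injective] using hS

lemma card_concepts_add_ncard [Fintype α] (hI : IsContranominalExtension I) :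
    Nat.card (Concepts I) + {S : Set α | ∀ b, ¬ S ⊆ {x | I (.inl x) (.inr b)}}.ncard =
      2 ^ (Fintype.card α + 1) := by
  rw [← ncard_image_of_injective _ (image_injective.2 Sum.inl_injective),
    ← hI.setOf_extentOf_intentOf_ne, card_concepts_add_ncard_setOf_extentOf_intentOf_ne]
  simp

end IsContranominalExtension

lemma ncard_compl_powerset_union_add {α : Type*} [Fintype α] (s t : Set α) :
    (𝒫 s ∪ 𝒫 t)ᶜ.ncard + 2 ^ s.ncard + 2 ^ t.ncard =
      2 ^ Fintype.card α + 2 ^ (s ∩ t).ncard := by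
  have hunion := ncard_union_add_ncard_inter (𝒫 s) (𝒫 t)
  have hcompl := ncard_add_ncard_compl (𝒫 s ∪ 𝒫 t)
  rw [← powerset_inter, ncard_powerset, ncard_powerset, ncard_powerset] at hunion
  rw [Nat.card_eq_fintype_card, Fintype.card_set] at hcompl
  omega

variable {n : ℕ} {m1 m2 : Set (Fin n)}

lemma isContranominalExtension_K12 : IsContranominalExtension (K12 n m1 m2) :=
  ⟨fun _ _ => Iff.rfl, fun _ => trivial, fun _ => id⟩

lemma isContranominalExtension_Ks : IsContranominalExtension (Ks n m1 m2) :=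
  ⟨fun _ _ => Iff.rfl, fun _ => trivial, fun _ => id⟩

lemma card_concepts_Ks (hcov : m1 ∪ m2 = univ) :
    Nat.card (Concepts (Ks n m1 m2)) = 2 ^ (n + 1) := by
  have h := isContranominalExtension_Ks.card_concepts_add_ncard (I := Ks n m1 m2)
  have hempty : {S : Set (Fin n) | ∀ b, ¬ S ⊆ {x | Ks n m1 m2 (.inl x) (.inr b)}} = ∅ := by
    exact eq_empty_of_forall_notMem fun S hS => hS () fun x _ => hcov.symm.subset (mem_univ x)
  rwa [hempty, ncard_empty, add_zero, Fintype.card_fin] at h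

lemma card_concepts_K12_add :
    Nat.card (Concepts (K12 n m1 m2)) + (𝒫 m1 ∪ 𝒫 m2)ᶜ.ncard = 2 ^ (n + 1) := by
  have h := isContranominalExtension_K12.card_concepts_add_ncard (I := K12 n m1 m2)
  have hnot : {S : Set (Fin n) | ∀ b, ¬ S ⊆ {x | K12 n m1 m2 (.inl x) (.inr b)}} =
      (𝒫 m1 ∪ 𝒫 m2)ᶜ := by
    ext S
    simp only [mem_ofPred_eq, Bool.forall_bool, mem_compl_iff, mem_union, mem_powerset_iff, not_or]
    rfl
  rwa [hnot, Fintype.card_fin] at h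

theorem stmt16_general (n : ℕ) (m1 m2 : Set (Fin n))
    (hcov : m1 ∪ m2 = Set.univ) :
    (Nat.card (Concepts (Ks n m1 m2)) : ℤ) -
        Nat.card (Concepts (K12 n m1 m2)) =
      2 ^ n - 2 ^ m1.ncard - 2 ^ m2.ncard + 2 ^ (m1 ∩ m2).ncard := by
  have hK12 := card_concepts_K12_add (m1 := m1) (m2 := m2)
  have hpowerset := ncard_compl_powerset_union_add m1 m2
  rw [Fintype.card_fin] at hpowerset
  rw [card_concepts_Ks hcov]
  push_cast
  zify at hK12 hpowerset
  linear_combination hpowerset - hK12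

/-- Let `n > 2` and `m_1', m_2' ⊆ S_n` with `m_1' ∪ m_2' = S_n`,
`∅ ⊊ m_1', m_2' ⊊ S_n`, and `m_1', m_2'` incomparable. Then
`|𝔅(K_s)| − |𝔅(K_12)| = 2^n − 2^|m_1'| − 2^|m_2'| + 2^|m_1' ∩ m_2'|`. -/
theorem stmt16 (n : ℕ) (hn : 2 < n) (m1 m2 : Set (Fin n))
    (hcov : m1 ∪ m2 = Set.univ)
    (h1ne : m1.Nonempty) (h1pr : m1 ≠ Set.univ)
    (h2ne : m2.Nonempty) (h2pr : m2 ≠ Set.univ)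
    (h12 : ¬ m1 ⊆ m2) (h21 : ¬ m2 ⊆ m1) :
    (Nat.card (Concepts (Ks n m1 m2)) : ℤ) -
        Nat.card (Concepts (K12 n m1 m2)) =
      2 ^ n - 2 ^ m1.ncard - 2 ^ m2.ncard + 2 ^ (m1 ∩ m2).ncard :=
  stmt16_general n m1 m2 hcov
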